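/- arXiv:1208.5310 — 3 statements merged into one kernel-verified Lean document; each statement's English description precedes it below -/
import Mathlib

section
/- Let Y be the derivation Y = ∂/∂y + p̄1 ∂/∂p + q̄1 ∂/∂q + q1 ∂/∂p1 + (6 p1^2 + y) ∂/∂q1 + Σ_{i≥1} (p̄_{i+1} ∂/∂p̄_i + q̄_{i+1} ∂/∂q̄_i) acting on polynomials in the variables x, y, p, q, p1, q1, p̄1, q̄1, p̄2, q̄2, …. Let Z̄ = Σ_{i≥1} (α_i ∂/∂p̄_i + β_i ∂/∂q̄_i) with each α_i, β_i a function of (y, p1, q1) only. Then [Y, Z̄] = 0 if and only if all α_i = 0 and β_i = 0, i.e. Z̄ = 0. -/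
/-- Jet variables for the Painlevé I hyperbolic system: `x`, `y`, `p1`, `q1`, and the
`y`-derivatives `pb i`, `qb i` with the convention `pb 0 = p`, `qb 0 = q`,
`pb i = p̄_i`, `qb i = q̄_i` for `i ≥ 1`. -/
inductive V : Type
  | x | y | p1 | q1
  | pb (i : ℕ) | qb (i : ℕ)
  deriving DecidableEq

/-- Partial derivative of `f` with respect to coordinate `i` at the point `z`. -/
noncomputable def pd {ι : Type*} [DecidableEq ι] (i : ι) (f : (ι → ℝ) → ℝ) (z : ι → ℝ) : ℝ :=
  deriv (fun t => f (Function.update z i t)) (z i)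

/-- The total `y`-derivative
`Y = ∂/∂y + p̄1 ∂/∂p + q̄1 ∂/∂q + q1 ∂/∂p1 + (6p1² + y) ∂/∂q1
  + Σ_{i≥1} (p̄_{i+1} ∂/∂p̄_i + q̄_{i+1} ∂/∂q̄_i)`. -/
noncomputable def Yop (f : (V → ℝ) → ℝ) (z : V → ℝ) : ℝ :=
  pd V.y f z + z V.q1 * pd V.p1 f z + (6 * (z V.p1) ^ 2 + z V.y) * pd V.q1 f z +
    ∑' i : ℕ, (z (V.pb (i + 1)) * pd (V.pb i) f z + z (V.qb (i + 1)) * pd (V.qb i) f z)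

/-- The vector field `Z̄ = Σ_{i≥1} (α_i ∂/∂p̄_i + β_i ∂/∂q̄_i)` with coefficients
`a i, b i` functions of `(y, p1, q1)` only (here `a i` is the coefficient of `∂/∂p̄_{i+1}`). -/
noncomputable def Zop (a b : ℕ → (Fin 3 → ℝ) → ℝ) (f : (V → ℝ) → ℝ) (z : V → ℝ) : ℝ :=
  ∑' i : ℕ, (a i ![z V.y, z V.p1, z V.q1] * pd (V.pb (i + 1)) f z +
             b i ![z V.y, z V.p1, z V.q1] * pd (V.qb (i + 1)) f z)

lemma pd_coord_self {ι : Type*} [DecidableEq ι] (i : ι) (z : ι → ℝ) :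
    pd i (fun w => w i) z = 1 := by
  simp [pd]

lemma pd_coord_ne {ι : Type*} [DecidableEq ι] {i j : ι} (h : j ≠ i) (z : ι → ℝ) :
    pd i (fun w => w j) z = 0 := by
  simp [pd, Function.update_of_ne h]

lemma pd_zero {ι : Type*} [DecidableEq ι] (i : ι) (z : ι → ℝ) :
    pd i (fun _ => (0:ℝ)) z = 0 := by
  simp [pd]

lemma Yop_zero (z : V → ℝ) : Yop (fun _ => (0:ℝ)) z = 0 := by
  simp [Yop, pd_zero]

lemma Yop_coord_pb (m : ℕ) (z : V → ℝ) :
    Yop (fun w => w (V.pb m)) z = z (V.pb (m + 1)) := by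
  unfold Yop
  rw [pd_coord_ne (by simp) z, pd_coord_ne (by simp) z, pd_coord_ne (by simp) z,
    tsum_eq_single m (fun i hi => by
      rw [pd_coord_ne (by simp [hi.symm]) z, pd_coord_ne (by simp) z]; ring)]
  rw [pd_coord_self, pd_coord_ne (by simp) z]
  ring

lemma Yop_coord_qb (m : ℕ) (z : V → ℝ) :
    Yop (fun w => w (V.qb m)) z = z (V.qb (m + 1)) := by
  unfold Yop
  rw [pd_coord_ne (by simp) z, pd_coord_ne (by simp) z, pd_coord_ne (by simp) z,
    tsum_eq_single m (fun i hi => by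
      rw [pd_coord_ne (by simp) z, pd_coord_ne (by simp [hi.symm]) z]; ring)]
  rw [pd_coord_self, pd_coord_ne (by simp) z]
  ring

lemma Zop_coord_pb (a b : ℕ → (Fin 3 → ℝ) → ℝ) (k : ℕ) (z : V → ℝ) :
    Zop a b (fun w => w (V.pb (k + 1))) z = a k ![z V.y, z V.p1, z V.q1] := by
  unfold Zop
  rw [tsum_eq_single k (fun i hi => by
      rw [pd_coord_ne (by simp [hi.symm]) z, pd_coord_ne (by simp) z]; ring)]
  rw [pd_coord_self, pd_coord_ne (by simp) z]
  ring

lemma Zop_coord_qb (a b : ℕ → (Fin 3 → ℝ) → ℝ) (k : ℕ) (z : V → ℝ) :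
    Zop a b (fun w => w (V.qb (k + 1))) z = b k ![z V.y, z V.p1, z V.q1] := by
  unfold Zop
  rw [tsum_eq_single k (fun i hi => by
      rw [pd_coord_ne (by simp) z, pd_coord_ne (by simp [hi.symm]) z]; ring)]
  rw [pd_coord_self, pd_coord_ne (by simp) z]
  ring

lemma Zop_coord_pb0 (a b : ℕ → (Fin 3 → ℝ) → ℝ) (z : V → ℝ) :
    Zop a b (fun w => w (V.pb 0)) z = 0 := by
  unfold Zop
  have : ∀ i : ℕ, a i ![z V.y, z V.p1, z V.q1] * pd (V.pb (i + 1)) (fun w => w (V.pb 0)) z +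
      b i ![z V.y, z V.p1, z V.q1] * pd (V.qb (i + 1)) (fun w => w (V.pb 0)) z = 0 := by
    intro i
    rw [pd_coord_ne (by simp) z, pd_coord_ne (by simp) z]; ring
  simp only [this, tsum_zero]

lemma Zop_coord_qb0 (a b : ℕ → (Fin 3 → ℝ) → ℝ) (z : V → ℝ) :
    Zop a b (fun w => w (V.qb 0)) z = 0 := by
  unfold Zop
  have : ∀ i : ℕ, a i ![z V.y, z V.p1, z V.q1] * pd (V.pb (i + 1)) (fun w => w (V.qb 0)) z +
      b i ![z V.y, z V.p1, z V.q1] * pd (V.qb (i + 1)) (fun w => w (V.qb 0)) z = 0 := by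
    intro i
    rw [pd_coord_ne (by simp) z, pd_coord_ne (by simp) z]; ring
  simp only [this, tsum_zero]

/-- a point of `V → ℝ` realizing a given `(y,p1,q1)` triple -/
def pt (v : Fin 3 → ℝ) : V → ℝ := fun w =>
  match w with
  | V.y => v 0
  | V.p1 => v 1
  | V.q1 => v 2
  | _ => 0

lemma pt_spec (v : Fin 3 → ℝ) : ![pt v V.y, pt v V.p1, pt v V.q1] = v := by
  funext j
  fin_cases j <;> simp [pt]

/-- Lemma 1: for `Z̄ = Σ (α_i ∂/∂p̄_i + β_i ∂/∂q̄_i)` with smooth coefficients depending only on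
`(y, p1, q1)`, finitely many nonzero, `[Y, Z̄] = 0` if and only if `Z̄ = 0`, i.e. all
coefficients vanish. -/
theorem stmt3 (a b : ℕ → (Fin 3 → ℝ) → ℝ)
    (ha : ∀ i, ContDiff ℝ (⊤ : ℕ∞) (a i)) (hb : ∀ i, ContDiff ℝ (⊤ : ℕ∞) (b i))
    (hfin : ∃ N, ∀ i, N ≤ i → a i = 0 ∧ b i = 0) :
    (∀ f z, Yop (Zop a b f) z = Zop a b (Yop f) z) ↔ (∀ i, a i = 0 ∧ b i = 0) := by
  constructor
  · intro h i
    induction i with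
    | zero =>
      constructor
      · funext v
        have := h (fun w => w (V.pb 0)) (pt v)
        rw [show Zop a b (fun w => w (V.pb 0)) = fun _ => (0:ℝ) from
            funext fun w => Zop_coord_pb0 a b w,
          show Yop (fun w => w (V.pb 0)) = fun w => w (V.pb 1) from
            funext fun w => Yop_coord_pb 0 w,
          Yop_zero, Zop_coord_pb a b 0, pt_spec] at this
        exact this.symm
      · funext v
        have := h (fun w => w (V.qb 0)) (pt v)
        rw [show Zop a b (fun w => w (V.qb 0)) = fun _ => (0:ℝ) from
            funext fun w => Zop_coord_qb0 a b w,
          show Yop (fun w => w (V.qb 0)) = fun w => w (V.qb 1) from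
            funext fun w => Yop_coord_qb 0 w,
          Yop_zero, Zop_coord_qb a b 0, pt_spec] at this
        exact this.symm
    | succ k ih =>
      constructor
      · funext v
        have := h (fun w => w (V.pb (k + 1))) (pt v)
        rw [show Zop a b (fun w => w (V.pb (k + 1))) = fun _ => (0:ℝ) from
            funext fun w => by rw [Zop_coord_pb a b k w, ih.1]; rfl,
          show Yop (fun w => w (V.pb (k + 1))) = fun w => w (V.pb (k + 2)) from
            funext fun w => Yop_coord_pb (k + 1) w,
          Yop_zero, Zop_coord_pb a b (k + 1), pt_spec] at this
        exact this.symm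
      · funext v
        have := h (fun w => w (V.qb (k + 1))) (pt v)
        rw [show Zop a b (fun w => w (V.qb (k + 1))) = fun _ => (0:ℝ) from
            funext fun w => by rw [Zop_coord_qb a b k w, ih.2]; rfl,
          show Yop (fun w => w (V.qb (k + 1))) = fun w => w (V.qb (k + 2)) from
            funext fun w => Yop_coord_qb (k + 1) w,
          Yop_zero, Zop_coord_qb a b (k + 1), pt_spec] at this
        exact this.symm
  · intro h f z
    have hZ : ∀ g : (V → ℝ) → ℝ, Zop a b g = fun _ => (0:ℝ) := by
      intro g
      funext w
      unfold Zop
      have : ∀ i : ℕ, a i ![w V.y, w V.p1, w V.q1] * pd (V.pb (i + 1)) g w +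
          b i ![w V.y, w V.p1, w V.q1] * pd (V.qb (i + 1)) g w = 0 := by
        intro i
        rw [(h i).1, (h i).2]
        simp
      simp only [this, tsum_zero]
    rw [hZ f, hZ (Yop f), Yop_zero]
end

section
/- For the system u_{xy} = v_x, v_{xy} = 12 u u_x, the x-characteristic vector fields X1 = ∂/∂u, X2 = ∂/∂v, and X3 = Σ_{k≥1} v_k ∂/∂u_k + 12 Σ_{k≥1} (Σ-expression) ∂/∂v_k, where the coefficient of ∂/∂v_k is D^{k-1}(12 u u1) expressed in jet variables (e.g. 12 u u1 for k=1, 12(u u2 + u1^2) for k=2, 12(u u3 + 3 u1 u2) for k=3), satisfy [X, X1] = 0, [X, X2] = 0, and [X, X3] = −v1 X1 − 12 u u1 X2, where X is the total x-derivative. -/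
/-- Jet variables for the system `u_{xy} = v_x`, `v_{xy} = 12 u u_x`:
`uu k` is `u_k` (with `uu 0 = u`) and `vv k` is `v_k` (with `vv 0 = v`). -/
abbrev J : Type := Fin 2 × ℕ

/-- The variable `u_k`. -/
def uu (k : ℕ) : J := (0, k)

/-- The variable `v_k`. -/
def vv (k : ℕ) : J := (1, k)

/-- A function of the jet variables depending smoothly on finitely many of them. -/
def SmoothCyl {ι : Type*} (f : (ι → ℝ) → ℝ) : Prop :=
  ∃ (n : ℕ) (v : Fin n → ι) (g : (Fin n → ℝ) → ℝ),
    ContDiff ℝ (⊤ : ℕ∞) g ∧ ∀ z, f z = g fun k => z (v k)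

/-- The total `x`-derivative `X = u1 ∂/∂u + v1 ∂/∂v + u2 ∂/∂u1 + v2 ∂/∂v1 + …`. -/
noncomputable def Xop (f : (J → ℝ) → ℝ) (z : J → ℝ) : ℝ :=
  ∑' k : ℕ, (z (uu (k + 1)) * pd (uu k) f z + z (vv (k + 1)) * pd (vv k) f z)

/-- The coefficients `c k = X^k (u u1)` of `X3`: `c 0 = u u1`, `c (k+1) = X (c k)`. -/
noncomputable def c : ℕ → (J → ℝ) → ℝ
  | 0 => fun z => z (uu 0) * z (uu 1)
  | k + 1 => Xop (c k)

/-- The characteristic vector field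
`X3 = Σ_{k≥1} v_k ∂/∂u_k + 12 Σ_{k≥1} X^{k−1}(u u1) ∂/∂v_k`. -/
noncomputable def X3op (f : (J → ℝ) → ℝ) (z : J → ℝ) : ℝ :=
  ∑' k : ℕ, (z (vv (k + 1)) * pd (uu (k + 1)) f z + 12 * c k z * pd (vv (k + 1)) f z)

section FinDim
variable {α : Type*} [Fintype α] [DecidableEq α]

lemma hasDerivAt_update' (y : α → ℝ) (q : α) (t : ℝ) :
    HasDerivAt (fun s => Function.update y q s) (Pi.single q 1) t := by
  rw [hasDerivAt_pi]
  intro p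
  rcases eq_or_ne p q with h | h
  · subst h
    simp only [Function.update_self, Pi.single_eq_same]
    exact hasDerivAt_id t
  · simp only [Function.update_of_ne h, Pi.single_eq_of_ne h]
    exact hasDerivAt_const t (y p)

lemma hasDerivAt_update_comp {g : (α → ℝ) → ℝ} (hg : Differentiable ℝ g) (y : α → ℝ) (q : α) (t : ℝ) :
    HasDerivAt (fun s => g (Function.update y q s))
      (fderiv ℝ g (Function.update y q t) (Pi.single q 1)) t :=
  ((hg _).hasFDerivAt).comp_hasDerivAt t (hasDerivAt_update' y q t)

lemma pd_eq_fderiv {g : (α → ℝ) → ℝ} (hg : Differentiable ℝ g) (q : α) (y : α → ℝ) :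
    pd q g y = fderiv ℝ g y (Pi.single q 1) := by
  have h := hasDerivAt_update_comp hg y q (y q)
  rw [Function.update_eq_self] at h
  exact h.deriv

lemma contDiff_pd {g : (α → ℝ) → ℝ} (hg : ContDiff ℝ (⊤ : ℕ∞) g) (q : α) :
    ContDiff ℝ (⊤ : ℕ∞) (pd q g) := by
  have : pd q g = fun y =>
      (ContinuousLinearMap.apply ℝ ℝ (Pi.single q 1 : α → ℝ)) (fderiv ℝ g y) := by
    funext y; exact pd_eq_fderiv (hg.differentiable (by simp)) q y
  rw [this]
  exact (ContinuousLinearMap.apply ℝ ℝ _).contDiff.comp (hg.fderiv_right (m := (⊤ : ℕ∞)) (by simp))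

lemma pd_pd_comm {g : (α → ℝ) → ℝ} (hg : ContDiff ℝ (⊤ : ℕ∞) g) (q r : α) (y : α → ℝ) :
    pd q (pd r g) y = pd r (pd q g) y := by
  have hdg : Differentiable ℝ g := hg.differentiable (by simp)
  have hdF : Differentiable ℝ (fun y => fderiv ℝ g y) :=
    (hg.fderiv_right (m := (⊤ : ℕ∞)) (by simp)).differentiable (by simp)
  have key : ∀ s t : α, pd s (pd t g) y
      = fderiv ℝ (fderiv ℝ g) y (Pi.single s 1) (Pi.single t 1) := by
    intro s t
    have e : pd t g = fun y => fderiv ℝ g y (Pi.single t 1) :=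
      funext (pd_eq_fderiv hdg t)
    rw [e]
    have h1 : HasDerivAt (fun u => fderiv ℝ g (Function.update y s u))
        (fderiv ℝ (fderiv ℝ g) y (Pi.single s 1)) (y s) := by
      have h0 := ((hdF (Function.update y s (y s))).hasFDerivAt).comp_hasDerivAt (y s)
        (hasDerivAt_update' y s (y s))
      rw [Function.update_eq_self] at h0
      exact h0
    have h2 : HasDerivAt (fun u => fderiv ℝ g (Function.update y s u) (Pi.single t 1))
        (fderiv ℝ (fderiv ℝ g) y (Pi.single s 1) (Pi.single t 1)) (y s) :=
      ((ContinuousLinearMap.apply ℝ ℝ (Pi.single t 1 : α → ℝ)).hasFDerivAt).comp_hasDerivAt (y s) h1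
    exact h2.deriv
  rw [key q r, key r q]
  exact second_derivative_symmetric (fun y' => (hdg y').hasFDerivAt) (hdF y).hasFDerivAt _ _
end FinDim

section RepLayer

/-- projection onto the first `N` levels of jet variables -/
def pr (N : ℕ) (z : J → ℝ) : Fin 2 × Fin N → ℝ := fun p => z (p.1, (p.2 : ℕ))

def RepJ (N : ℕ) (f : (J → ℝ) → ℝ) : Prop :=
  ∃ g : ((Fin 2 × Fin N) → ℝ) → ℝ, ContDiff ℝ (⊤ : ℕ∞) g ∧ f = fun z => g (pr N z)

variable {N M : ℕ} {f h : (J → ℝ) → ℝ}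

lemma smoothCyl_rep (hf : SmoothCyl f) : ∃ N, RepJ N f := by
  obtain ⟨n, v, g0, hg0, hfe⟩ := hf
  refine ⟨(Finset.univ.sup fun k => (v k).2) + 1, ?_⟩
  have hb : ∀ k, (v k).2 < (Finset.univ.sup fun k => (v k).2) + 1 := by
    intro k
    exact Nat.lt_succ_of_le (Finset.le_sup (f := fun k => (v k).2) (Finset.mem_univ k))
  refine ⟨fun y => g0 (fun k => y ((v k).1, ⟨(v k).2, hb k⟩)), ?_, ?_⟩
  · exact hg0.comp (ContinuousLinearMap.contDiff
      (ContinuousLinearMap.pi fun k => ContinuousLinearMap.proj (R := ℝ)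
        (φ := fun _ : Fin 2 × Fin ((Finset.univ.sup fun k => (v k).2) + 1) => ℝ) ((v k).1, ⟨(v k).2, hb k⟩)))
  · funext z
    rw [hfe]
    rfl

lemma pr_update (z : J → ℝ) (a : Fin 2) (m : ℕ) (h : m < N) (t : ℝ) :
    pr N (Function.update z (a, m) t) = Function.update (pr N z) (a, ⟨m, h⟩) t := by
  funext p
  rcases eq_or_ne p (a, ⟨m, h⟩) with hp | hp
  · subst hp; simp [pr]
  · have hne : ((p.1, (p.2 : ℕ)) : J) ≠ (a, m) := by
      intro hc
      rw [Prod.ext_iff] at hc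
      exact hp (Prod.ext hc.1 (Fin.ext hc.2))
    simp only [pr, Function.update_of_ne hne, Function.update_of_ne hp]

lemma pr_update_ge (z : J → ℝ) (a : Fin 2) (m : ℕ) (h : N ≤ m) (t : ℝ) :
    pr N (Function.update z (a, m) t) = pr N z := by
  funext p
  have hne : ((p.1, (p.2 : ℕ)) : J) ≠ (a, m) := by
    intro hc
    rw [Prod.ext_iff] at hc
    have := p.2.isLt
    omega
  simp only [pr, Function.update_of_ne hne]

lemma rep_pd_lt {g : ((Fin 2 × Fin N) → ℝ) → ℝ} (a : Fin 2) {m : ℕ} (h : m < N) (z : J → ℝ) :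
    pd ((a, m) : J) (fun z => g (pr N z)) z = pd ((a, ⟨m, h⟩) : Fin 2 × Fin N) g (pr N z) := by
  unfold pd
  have he : (fun t => g (pr N (Function.update z (a, m) t)))
      = fun t => g (Function.update (pr N z) (a, ⟨m, h⟩) t) := by
    funext t; rw [pr_update z a m h t]
  rw [he]
  rfl

lemma rep_pd_ge {g : ((Fin 2 × Fin N) → ℝ) → ℝ} (a : Fin 2) {m : ℕ} (h : N ≤ m) (z : J → ℝ) :
    pd ((a, m) : J) (fun z => g (pr N z)) z = 0 := by
  unfold pd
  have he : (fun t => g (pr N (Function.update z (a, m) t))) = fun _ => g (pr N z) := by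
    funext t; rw [pr_update_ge z a m h t]
  rw [he, deriv_const]

end RepLayer

section Calc
variable {N M K : ℕ} {f h : (J → ℝ) → ℝ}

lemma RepJ.congr (he : ∀ z, f z = h z) (hh : RepJ N h) : RepJ N f := by
  obtain ⟨g, hg, rfl⟩ := hh
  exact ⟨g, hg, funext he⟩

lemma RepJ.mono (hf : RepJ N f) (hNM : N ≤ M) : RepJ M f := by
  obtain ⟨g, hg, rfl⟩ := hf
  refine ⟨fun y => g (fun p => y (p.1, Fin.castLE hNM p.2)), ?_, ?_⟩
  · exact hg.comp (ContinuousLinearMap.contDiff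
      (ContinuousLinearMap.pi fun p : Fin 2 × Fin N => ContinuousLinearMap.proj (R := ℝ)
        (φ := fun _ : Fin 2 × Fin M => ℝ) (p.1, Fin.castLE hNM p.2)))
  · rfl

lemma RepJ.const (r : ℝ) : RepJ N (fun _ => r) := ⟨fun _ => r, contDiff_const, rfl⟩

lemma RepJ.coord (i : J) (h : i.2 < N) : RepJ N (fun z => z i) :=
  ⟨fun y => y (i.1, ⟨i.2, h⟩), (ContinuousLinearMap.proj (R := ℝ) (φ := fun _ : Fin 2 × Fin N => ℝ)
    (i.1, ⟨i.2, h⟩)).contDiff, rfl⟩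

lemma RepJ.add (hf : RepJ N f) (hh : RepJ N h) : RepJ N (fun z => f z + h z) := by
  obtain ⟨g1, hg1, rfl⟩ := hf
  obtain ⟨g2, hg2, rfl⟩ := hh
  exact ⟨fun y => g1 y + g2 y, hg1.add hg2, rfl⟩

lemma RepJ.mul (hf : RepJ N f) (hh : RepJ N h) : RepJ N (fun z => f z * h z) := by
  obtain ⟨g1, hg1, rfl⟩ := hf
  obtain ⟨g2, hg2, rfl⟩ := hh
  exact ⟨fun y => g1 y * g2 y, hg1.mul hg2, rfl⟩

lemma RepJ.sum {β : Type*} (s : Finset β) (F : β → (J → ℝ) → ℝ)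
    (hF : ∀ b ∈ s, RepJ N (F b)) : RepJ N (fun z => ∑ b ∈ s, F b z) := by
  classical
  revert hF
  induction s using Finset.cons_induction with
  | empty => exact fun _ => RepJ.congr (fun z => by simp) (RepJ.const 0)
  | cons b s hb ih =>
      intro hF
      have h1 := hF b (Finset.mem_cons_self b s)
      have h2 := ih (fun b' hb' => hF b' (Finset.mem_cons_of_mem hb'))
      exact RepJ.congr (fun z => by rw [Finset.sum_cons]) (h1.add h2)

lemma RepJ.pd (hf : RepJ N f) (i : J) : RepJ N (pd i f) := by
  obtain ⟨g, hg, rfl⟩ := hf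
  obtain ⟨a, m⟩ := i
  by_cases h : m < N
  · exact ⟨pd (a, ⟨m, h⟩) g, contDiff_pd hg _, funext fun z => rep_pd_lt a h z⟩
  · exact ⟨fun _ => 0, contDiff_const, funext fun z => rep_pd_ge a (le_of_not_gt h) z⟩

lemma pd_zero_of_ge (hf : RepJ N f) (a : Fin 2) {m : ℕ} (h : N ≤ m) (z : J → ℝ) :
    pd ((a, m) : J) f z = 0 := by
  obtain ⟨g, hg, rfl⟩ := hf
  exact rep_pd_ge a h z

lemma hasDerivAt_cyl (hf : RepJ N f) (i : J) (z : J → ℝ) :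
    HasDerivAt (fun t => f (Function.update z i t)) (pd i f z) (z i) := by
  obtain ⟨g, hg, rfl⟩ := hf
  obtain ⟨a, m⟩ := i
  by_cases h : m < N
  · have he : (fun t => g (pr N (Function.update z (a, m) t)))
        = fun t => g (Function.update (pr N z) (a, ⟨m, h⟩) t) := by
      funext t; rw [pr_update z a m h t]
    rw [rep_pd_lt a h z, pd_eq_fderiv (hg.differentiable (by simp)), he]
    have h0 := hasDerivAt_update_comp (hg.differentiable (by simp)) (pr N z) (a, ⟨m, h⟩)
      (pr N z (a, ⟨m, h⟩))
    rw [Function.update_eq_self] at h0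
    exact h0
  · have he : (fun t => g (pr N (Function.update z (a, m) t))) = fun _ => g (pr N z) := by
      funext t; rw [pr_update_ge z a m (le_of_not_gt h) t]
    rw [rep_pd_ge a (le_of_not_gt h) z, he]
    exact hasDerivAt_const _ _

lemma pd_const (i : J) (r : ℝ) (z : J → ℝ) : pd i (fun _ => r) z = 0 := deriv_const _ _

lemma pd_add (hf : RepJ N f) (hh : RepJ N h) (i : J) (z : J → ℝ) :
    pd i (fun z => f z + h z) z = pd i f z + pd i h z :=
  ((hasDerivAt_cyl hf i z).add (hasDerivAt_cyl hh i z)).deriv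

lemma pd_mul (hf : RepJ N f) (hh : RepJ M h) (i : J) (z : J → ℝ) :
    pd i (fun z => f z * h z) z = pd i f z * h z + f z * pd i h z := by
  have := ((hasDerivAt_cyl hf i z).mul (hasDerivAt_cyl hh i z)).deriv
  simp only [Function.update_eq_self] at this
  exact this

lemma pd_sum {β : Type*} (s : Finset β) (F : β → (J → ℝ) → ℝ)
    (hF : ∀ b ∈ s, RepJ N (F b)) (i : J) (z : J → ℝ) :
    pd i (fun z => ∑ b ∈ s, F b z) z = ∑ b ∈ s, pd i (F b) z :=
  (HasDerivAt.fun_sum fun b hb => hasDerivAt_cyl (hF b hb) i z).deriv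

lemma pd_coord (i j : J) (z : J → ℝ) : pd i (fun z => z j) z = if j = i then 1 else 0 := by
  unfold pd
  rcases eq_or_ne j i with hj | hj
  · subst hj
    simp only [Function.update_self, if_pos rfl]
    exact (hasDerivAt_id (z j)).deriv
  · simp only [Function.update_of_ne hj, if_neg hj]
    exact deriv_const _ _

lemma pd_comm (hf : RepJ N f) (i j : J) (z : J → ℝ) :
    pd i (pd j f) z = pd j (pd i f) z := by
  obtain ⟨g, hg, rfl⟩ := hf
  obtain ⟨a, m⟩ := i
  obtain ⟨b, l⟩ := j
  by_cases hm : m < N <;> by_cases hl : l < N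
  · have e1 : pd ((b, l) : J) (fun z => g (pr N z)) = fun z => pd (b, ⟨l, hl⟩) g (pr N z) :=
      funext fun z => rep_pd_lt b hl z
    have e2 : pd ((a, m) : J) (fun z => g (pr N z)) = fun z => pd (a, ⟨m, hm⟩) g (pr N z) :=
      funext fun z => rep_pd_lt a hm z
    rw [e1, e2, rep_pd_lt a hm z, rep_pd_lt b hl z, pd_pd_comm hg]
  · have e1 : pd ((b, l) : J) (fun z => g (pr N z)) = fun _ => (0 : ℝ) :=
      funext fun z => rep_pd_ge b (le_of_not_gt hl) z
    have e2 : pd ((a, m) : J) (fun z => g (pr N z)) = fun z => pd (a, ⟨m, hm⟩) g (pr N z) :=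
      funext fun z => rep_pd_lt a hm z
    rw [e1, e2, pd_const, rep_pd_ge b (le_of_not_gt hl) z]
  · have e1 : pd ((b, l) : J) (fun z => g (pr N z)) = fun z => pd (b, ⟨l, hl⟩) g (pr N z) :=
      funext fun z => rep_pd_lt b hl z
    have e2 : pd ((a, m) : J) (fun z => g (pr N z)) = fun _ => (0 : ℝ) :=
      funext fun z => rep_pd_ge a (le_of_not_gt hm) z
    rw [e1, e2, pd_const, rep_pd_ge a (le_of_not_gt hm) z]
  · have e1 : pd ((b, l) : J) (fun z => g (pr N z)) = fun _ => (0 : ℝ) :=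
      funext fun z => rep_pd_ge b (le_of_not_gt hl) z
    have e2 : pd ((a, m) : J) (fun z => g (pr N z)) = fun _ => (0 : ℝ) :=
      funext fun z => rep_pd_ge a (le_of_not_gt hm) z
    rw [e1, e2, pd_const, pd_const]

end Calc

section XopLayer
variable {N M K : ℕ} {f h : (J → ℝ) → ℝ}

lemma Xop_eq_sum (hf : RepJ N f) (hNM : N ≤ M) (z : J → ℝ) :
    Xop f z = ∑ k ∈ Finset.range M,
      (z (uu (k + 1)) * pd (uu k) f z + z (vv (k + 1)) * pd (vv k) f z) := by
  unfold Xop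
  apply tsum_eq_sum
  intro k hk
  have hk' : N ≤ k := by
    simp only [Finset.mem_range, not_lt] at hk
    omega
  have h1 : pd (uu k) f z = 0 := pd_zero_of_ge hf 0 hk' z
  have h2 : pd (vv k) f z = 0 := pd_zero_of_ge hf 1 hk' z
  rw [h1, h2]
  ring

lemma RepJ.Xop (hf : RepJ N f) : RepJ (N + 1) (Xop f) := by
  refine RepJ.congr (fun z => Xop_eq_sum hf le_rfl z) ?_
  refine RepJ.sum _ _ (fun k hk => ?_)
  have hk' : k < N := Finset.mem_range.mp hk
  exact ((RepJ.coord (uu (k+1)) (by simp [uu]; omega)).mul ((hf.pd (uu k)).mono (by omega))).add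
    ((RepJ.coord (vv (k+1)) (by simp [vv]; omega)).mul ((hf.pd (vv k)).mono (by omega)))

lemma rep_c (k : ℕ) : RepJ (k + 2) (c k) := by
  induction k with
  | zero =>
      exact RepJ.congr (fun z => by rw [c]) ((RepJ.coord (uu 0) (by simp [uu])).mul
        (RepJ.coord (uu 1) (by simp [uu])))
  | succ k ih =>
      exact RepJ.congr (fun z => by rw [c]) ih.Xop

lemma pd_Xop_succ (hf : RepJ N f) (a : Fin 2) (m : ℕ) (z : J → ℝ) :
    pd ((a, m + 1) : J) (Xop f) z = pd ((a, m) : J) f z + Xop (pd ((a, m + 1) : J) f) z := by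
  set M := max N (m + 2) with hM
  have hNM : N ≤ M := le_max_left _ _
  have hmM : m + 2 ≤ M := le_max_right _ _
  have hf' : RepJ M f := hf.mono hNM
  have he : Xop f = fun z => ∑ k ∈ Finset.range M,
      (z (uu (k + 1)) * pd (uu k) f z + z (vv (k + 1)) * pd (vv k) f z) :=
    funext (Xop_eq_sum hf' le_rfl)
  have hrep : ∀ k ∈ Finset.range M, RepJ (M + 1)
      (fun z => z (uu (k + 1)) * pd (uu k) f z + z (vv (k + 1)) * pd (vv k) f z) := by
    intro k hk
    have hk' : k < M := Finset.mem_range.mp hk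
    exact ((RepJ.coord (uu (k+1)) (by simp [uu]; omega)).mul ((hf'.pd (uu k)).mono (by omega))).add
      ((RepJ.coord (vv (k+1)) (by simp [vv]; omega)).mul ((hf'.pd (vv k)).mono (by omega)))
  rw [he, pd_sum _ _ hrep]
  have hsum : ∀ k ∈ Finset.range M,
      pd ((a, m + 1) : J)
        (fun z => z (uu (k + 1)) * pd (uu k) f z + z (vv (k + 1)) * pd (vv k) f z) z
      = ((if uu (k + 1) = ((a, m + 1) : J) then (1:ℝ) else 0) * pd (uu k) f z
          + (if vv (k + 1) = ((a, m + 1) : J) then (1:ℝ) else 0) * pd (vv k) f z)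
        + (z (uu (k + 1)) * pd (uu k) (pd ((a, m + 1) : J) f) z
          + z (vv (k + 1)) * pd (vv k) (pd ((a, m + 1) : J) f) z) := by
    intro k hk
    have hk' : k < M := Finset.mem_range.mp hk
    have r1 : RepJ (M + 1) (fun z => z (uu (k+1))) := RepJ.coord _ (by simp [uu]; omega)
    have r2 : RepJ (M + 1) (pd (uu k) f) := (hf'.pd _).mono (by omega)
    have r3 : RepJ (M + 1) (fun z => z (vv (k+1))) := RepJ.coord _ (by simp [vv]; omega)
    have r4 : RepJ (M + 1) (pd (vv k) f) := (hf'.pd _).mono (by omega)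
    rw [pd_add (r1.mul r2) (r3.mul r4), pd_mul r1 r2, pd_mul r3 r4, pd_coord, pd_coord,
      pd_comm hf' ((a, m+1) : J) (uu k) z, pd_comm hf' ((a, m+1) : J) (vv k) z]
    ring
  rw [Finset.sum_congr rfl hsum, Finset.sum_add_distrib]
  have h2 : ∑ k ∈ Finset.range M,
      (z (uu (k + 1)) * pd (uu k) (pd ((a, m + 1) : J) f) z
        + z (vv (k + 1)) * pd (vv k) (pd ((a, m + 1) : J) f) z)
      = Xop (pd ((a, m + 1) : J) f) z := (Xop_eq_sum (hf'.pd _) le_rfl z).symm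
  rw [h2]
  congr 1
  have h10 : ((1 : Fin 2) : Fin 2) ≠ 0 := by decide
  have hmem : m ∈ Finset.range M := Finset.mem_range.mpr (by omega)
  fin_cases a
  · simp only [uu, vv, Prod.mk.injEq, Nat.add_right_cancel_iff]
    simp [h10, Finset.sum_ite_eq' (Finset.range M) m, hmem, ite_mul]
  · simp only [uu, vv, Prod.mk.injEq, Nat.add_right_cancel_iff]
    simp [h10, Finset.sum_ite_eq' (Finset.range M) m, hmem, ite_mul]

lemma pd_Xop_zero (hf : RepJ N f) (a : Fin 2) (z : J → ℝ) :
    pd ((a, 0) : J) (Xop f) z = Xop (pd ((a, 0) : J) f) z := by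
  have hf' : RepJ N f := hf
  have he : Xop f = fun z => ∑ k ∈ Finset.range N,
      (z (uu (k + 1)) * pd (uu k) f z + z (vv (k + 1)) * pd (vv k) f z) :=
    funext (Xop_eq_sum hf' le_rfl)
  have hrep : ∀ k ∈ Finset.range N, RepJ (N + 1)
      (fun z => z (uu (k + 1)) * pd (uu k) f z + z (vv (k + 1)) * pd (vv k) f z) := by
    intro k hk
    have hk' : k < N := Finset.mem_range.mp hk
    exact ((RepJ.coord (uu (k+1)) (by simp [uu]; omega)).mul ((hf'.pd (uu k)).mono (by omega))).add
      ((RepJ.coord (vv (k+1)) (by simp [vv]; omega)).mul ((hf'.pd (vv k)).mono (by omega)))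
  rw [he, pd_sum _ _ hrep]
  have hsum : ∀ k ∈ Finset.range N,
      pd ((a, 0) : J)
        (fun z => z (uu (k + 1)) * pd (uu k) f z + z (vv (k + 1)) * pd (vv k) f z) z
      = z (uu (k + 1)) * pd (uu k) (pd ((a, 0) : J) f) z
          + z (vv (k + 1)) * pd (vv k) (pd ((a, 0) : J) f) z := by
    intro k hk
    have hk' : k < N := Finset.mem_range.mp hk
    have r1 : RepJ (N + 1) (fun z => z (uu (k+1))) := RepJ.coord _ (by simp [uu]; omega)
    have r2 : RepJ (N + 1) (pd (uu k) f) := (hf'.pd _).mono (by omega)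
    have r3 : RepJ (N + 1) (fun z => z (vv (k+1))) := RepJ.coord _ (by simp [vv]; omega)
    have r4 : RepJ (N + 1) (pd (vv k) f) := (hf'.pd _).mono (by omega)
    have i1 : (uu (k + 1) : J) ≠ ((a, 0) : J) := by simp [uu, Prod.ext_iff]
    have i2 : (vv (k + 1) : J) ≠ ((a, 0) : J) := by simp [vv, Prod.ext_iff]
    rw [pd_add (r1.mul r2) (r3.mul r4), pd_mul r1 r2, pd_mul r3 r4, pd_coord, pd_coord,
      if_neg i1, if_neg i2, pd_comm hf' ((a, 0) : J) (uu k) z, pd_comm hf' ((a, 0) : J) (vv k) z]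
    ring
  rw [Finset.sum_congr rfl hsum]
  exact (Xop_eq_sum (hf'.pd _) le_rfl z).symm

end XopLayer

section Final
variable {N M K : ℕ} {f h : (J → ℝ) → ℝ}

lemma Xop_sum {β : Type*} (s : Finset β) (F : β → (J → ℝ) → ℝ)
    (hF : ∀ b ∈ s, RepJ K (F b)) (z : J → ℝ) :
    Xop (fun z => ∑ b ∈ s, F b z) z = ∑ b ∈ s, Xop (F b) z := by
  rw [Xop_eq_sum (RepJ.sum s F hF) le_rfl z]
  have h1 : ∀ j ∈ Finset.range K,
      (z (uu (j + 1)) * pd (uu j) (fun z => ∑ b ∈ s, F b z) z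
        + z (vv (j + 1)) * pd (vv j) (fun z => ∑ b ∈ s, F b z) z)
      = ∑ b ∈ s, (z (uu (j + 1)) * pd (uu j) (F b) z + z (vv (j + 1)) * pd (vv j) (F b) z) := by
    intro j hj
    rw [pd_sum s F hF, pd_sum s F hF, Finset.mul_sum, Finset.mul_sum,
      ← Finset.sum_add_distrib]
  rw [Finset.sum_congr rfl h1, Finset.sum_comm]
  exact Finset.sum_congr rfl fun b hb => (Xop_eq_sum (hF b hb) le_rfl z).symm

lemma Xop_add (hf : RepJ K f) (hh : RepJ K h) (z : J → ℝ) :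
    Xop (fun z => f z + h z) z = Xop f z + Xop h z := by
  rw [Xop_eq_sum (hf.add hh) le_rfl z, Xop_eq_sum hf le_rfl z, Xop_eq_sum hh le_rfl z,
    ← Finset.sum_add_distrib]
  refine Finset.sum_congr rfl fun k hk => ?_
  rw [pd_add hf hh, pd_add hf hh]
  ring

lemma Xop_mul (hf : RepJ K f) (hh : RepJ K h) (z : J → ℝ) :
    Xop (fun z => f z * h z) z = Xop f z * h z + f z * Xop h z := by
  rw [Xop_eq_sum (hf.mul hh) le_rfl z, Xop_eq_sum hf le_rfl z, Xop_eq_sum hh le_rfl z,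
    Finset.sum_mul, Finset.mul_sum, ← Finset.sum_add_distrib]
  refine Finset.sum_congr rfl fun k hk => ?_
  rw [pd_mul hf hh, pd_mul hf hh]
  ring

lemma Xop_const (r : ℝ) (z : J → ℝ) : Xop (fun _ => r) z = 0 := by
  rw [Xop_eq_sum (RepJ.const r (N := 0)) le_rfl z]
  simp

lemma Xop_const_mul (hh : RepJ K h) (r : ℝ) (z : J → ℝ) :
    Xop (fun z => r * h z) z = r * Xop h z := by
  rw [Xop_mul (RepJ.const r) hh z, Xop_const]
  ring

lemma Xop_coord_vv (k : ℕ) (z : J → ℝ) :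
    Xop (fun z => z (vv (k + 1))) z = z (vv (k + 2)) := by
  rw [Xop_eq_sum (RepJ.coord (vv (k + 1)) (show (vv (k+1)).2 < k + 2 by simp [vv])) le_rfl z]
  have h10 : ((1 : Fin 2) : Fin 2) ≠ 0 := by decide
  have hmem : k + 1 ∈ Finset.range (k + 2) := Finset.mem_range.mpr (by omega)
  simp only [pd_coord, uu, vv, Prod.mk.injEq, Nat.add_right_cancel_iff]
  simp [h10, Finset.sum_ite_eq' (Finset.range (k + 2)) (k + 1), hmem, mul_ite]

lemma X3op_eq_sum (hf : RepJ N f) (hNM : N ≤ M + 1) (z : J → ℝ) :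
    X3op f z = ∑ k ∈ Finset.range M,
      (z (vv (k + 1)) * pd (uu (k + 1)) f z + 12 * c k z * pd (vv (k + 1)) f z) := by
  unfold X3op
  apply tsum_eq_sum
  intro k hk
  have hk' : N ≤ k + 1 := by
    simp only [Finset.mem_range, not_lt] at hk
    omega
  have h1 : pd (uu (k + 1)) f z = 0 := pd_zero_of_ge hf 0 hk' z
  have h2 : pd (vv (k + 1)) f z = 0 := pd_zero_of_ge hf 1 hk' z
  rw [h1, h2]
  ring

/-- For the system `u_{xy} = v_x`, `v_{xy} = 12 u u_x`, with `X1 = ∂/∂u`, `X2 = ∂/∂v` and `X3`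
as above: `[X, X1] = 0`, `[X, X2] = 0` and `[X, X3] = −v1 X1 − 12 u u1 X2`. -/
theorem stmt7 : ∀ f, SmoothCyl f →
    (∀ z, Xop (pd (uu 0) f) z - pd (uu 0) (Xop f) z = 0) ∧
    (∀ z, Xop (pd (vv 0) f) z - pd (vv 0) (Xop f) z = 0) ∧
    (∀ z, Xop (X3op f) z - X3op (Xop f) z =
      -(z (vv 1)) * pd (uu 0) f z - 12 * z (uu 0) * z (uu 1) * pd (vv 0) f z) := by
  intro f hsf
  obtain ⟨N, hf⟩ := smoothCyl_rep hsf
  refine ⟨fun z => by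
      rw [show (uu 0) = ((0 : Fin 2), (0 : ℕ)) from rfl, pd_Xop_zero hf 0 z]; ring,
    fun z => by
      rw [show (vv 0) = ((1 : Fin 2), (0 : ℕ)) from rfl, pd_Xop_zero hf 1 z]; ring, ?_⟩
  intro z
  -- the termwise functions of X3op f
  set F : ℕ → (J → ℝ) → ℝ := fun k => fun z =>
    z (vv (k + 1)) * pd (uu (k + 1)) f z + 12 * c k z * pd (vv (k + 1)) f z with hF
  have hFrep : ∀ k ∈ Finset.range N, RepJ (N + 2) (F k) := by
    intro k hk
    have hk' : k < N := Finset.mem_range.mp hk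
    exact ((RepJ.coord (vv (k+1)) (by simp [vv]; omega)).mul
        ((hf.pd (uu (k+1))).mono (by omega))).add
      (((RepJ.const 12).mul ((rep_c k).mono (by omega))).mul
        ((hf.pd (vv (k+1))).mono (by omega)))
  have hX3f : X3op f = fun z => ∑ k ∈ Finset.range N, F k z :=
    funext fun z => X3op_eq_sum hf (by omega) z
  -- left side expansion
  have hL : Xop (X3op f) z = ∑ k ∈ Finset.range N,
      (z (vv (k + 2)) * pd (uu (k + 1)) f z + z (vv (k + 1)) * Xop (pd (uu (k + 1)) f) z
        + (12 * c (k + 1) z * pd (vv (k + 1)) f z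
            + 12 * c k z * Xop (pd (vv (k + 1)) f) z)) := by
    rw [hX3f, Xop_sum (Finset.range N) F hFrep z]
    refine Finset.sum_congr rfl fun k hk => ?_
    have hk' : k < N := Finset.mem_range.mp hk
    have r1 : RepJ (N + 2) (fun z => z (vv (k+1))) := RepJ.coord _ (by simp [vv]; omega)
    have r2 : RepJ (N + 2) (pd (uu (k+1)) f) := (hf.pd _).mono (by omega)
    have r5 : RepJ (N + 2) (c k) := (rep_c k).mono (by omega)
    have r3 : RepJ (N + 2) (fun z => 12 * c k z) := (RepJ.const 12).mul r5
    have r4 : RepJ (N + 2) (pd (vv (k+1)) f) := (hf.pd _).mono (by omega)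
    rw [hF]
    rw [Xop_add (r1.mul r2) (r3.mul r4) z, Xop_mul r1 r2 z, Xop_mul r3 r4 z,
      Xop_coord_vv k z, Xop_const_mul r5 12 z]
    have hc : Xop (c k) z = c (k + 1) z := by rw [c]
    rw [hc]
  -- right side expansion
  have hR : X3op (Xop f) z = ∑ k ∈ Finset.range N,
      (z (vv (k + 1)) * (pd (uu k) f z + Xop (pd (uu (k + 1)) f) z)
        + 12 * c k z * (pd (vv k) f z + Xop (pd (vv (k + 1)) f) z)) := by
    rw [X3op_eq_sum (M := N) hf.Xop (by omega) z]
    refine Finset.sum_congr rfl fun k hk => ?_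
    have e1 : pd (uu (k + 1)) (Xop f) z
        = pd (uu k) f z + Xop (pd (uu (k + 1)) f) z := pd_Xop_succ hf 0 k z
    have e2 : pd (vv (k + 1)) (Xop f) z
        = pd (vv k) f z + Xop (pd (vv (k + 1)) f) z := pd_Xop_succ hf 1 k z
    rw [e1, e2]
  set A : ℕ → ℝ := fun k => z (vv (k + 1)) * pd (uu k) f z + 12 * c k z * pd (vv k) f z with hA
  have key : Xop (X3op f) z - X3op (Xop f) z = ∑ k ∈ Finset.range N, (A (k + 1) - A k) := by
    rw [hL, hR, ← Finset.sum_sub_distrib]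
    refine Finset.sum_congr rfl fun k hk => ?_
    rw [hA]
    ring
  rw [key, Finset.sum_range_sub A N]
  have hAN : A N = 0 := by
    rw [hA]
    have h1 : pd (uu N) f z = 0 := pd_zero_of_ge hf 0 le_rfl z
    have h2 : pd (vv N) f z = 0 := pd_zero_of_ge hf 1 le_rfl z
    simp [h1, h2]
  rw [hAN, hA]
  have hc0 : c 0 z = z (uu 0) * z (uu 1) := by rw [c]
  simp only [hc0]
  ring

end Final
end

section
/- With X13 = 12 Σ_{k≥1} u_k ∂/∂v_k and X3 as in the x-characteristic ring of u_{xy}=v_x, v_{xy}=12uu_x, the commutator X313 = [X3, X13] equals 12 Σ_{k≥1} v_k ∂/∂v_k − 12 Σ_{k≥1} u_k ∂/∂u_k, and satisfies [X, X313] = 12 u1 X1 − 12 v1 X2. -/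
/-- `X13 = [X1, X3] = 12 Σ_{k≥1} u_k ∂/∂v_k`. -/
noncomputable def X13op (f : (J → ℝ) → ℝ) (z : J → ℝ) : ℝ :=
  12 * ∑' k : ℕ, z (uu (k + 1)) * pd (vv (k + 1)) f z

/-- `X313 = [X3, X13] = 12 Σ_{k≥1} (v_k ∂/∂v_k − u_k ∂/∂u_k)`. -/
noncomputable def X313op (f : (J → ℝ) → ℝ) (z : J → ℝ) : ℝ :=
  12 * ∑' k : ℕ, (z (vv (k + 1)) * pd (vv (k + 1)) f z - z (uu (k + 1)) * pd (uu (k + 1)) f z)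

section aux
variable {n : ℕ}

/-- indicator vector of coordinate `i` through the variable map `v`. -/
def ee (v : Fin n → J) (i : J) : Fin n → ℝ := fun k => if v k = i then 1 else 0

variable (v : Fin n → J) (g : (Fin n → ℝ) → ℝ)

noncomputable def FF : (J → ℝ) → ℝ := fun z => g (z ∘ v)
noncomputable def P1 (i : J) (z : J → ℝ) : ℝ := fderiv ℝ g (z ∘ v) (ee v i)
noncomputable def P2 (i j : J) (z : J → ℝ) : ℝ :=
  fderiv ℝ (fun y => fderiv ℝ g y (ee v j)) (z ∘ v) (ee v i)

lemma uu_eq_uu (a b : ℕ) : uu a = uu b ↔ a = b := by simp [uu, Prod.ext_iff]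
lemma vv_eq_vv (a b : ℕ) : vv a = vv b ↔ a = b := by simp [vv, Prod.ext_iff]
lemma uu_ne_vv (a b : ℕ) : uu a ≠ vv b := by intro h; have := congrArg Prod.fst h; simp [uu, vv] at this
lemma vv_ne_uu (a b : ℕ) : vv a ≠ uu b := by intro h; have := congrArg Prod.fst h; simp [uu, vv] at this
lemma uu_eq_vv (a b : ℕ) : uu a = vv b ↔ False := iff_of_false (uu_ne_vv a b) not_false

lemma update_comp (z : J → ℝ) (i : J) (t : ℝ) :
    (Function.update z i t) ∘ v = (z ∘ v) + (t - z i) • ee v i := by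
  funext k
  simp only [Function.comp_apply, Function.update_apply, Pi.add_apply, Pi.smul_apply, ee,
    smul_eq_mul]
  split_ifs with h
  · rw [h]; ring
  · ring

lemma hasDerivAt_cyl_s9 {G : (Fin n → ℝ) → ℝ} (hG : ContDiff ℝ (⊤ : ℕ∞) G) (z : J → ℝ) (i : J) :
    HasDerivAt (fun t => G ((Function.update z i t) ∘ v)) (fderiv ℝ G (z ∘ v) (ee v i)) (z i) := by
  have h1 : HasDerivAt (fun t : ℝ => (z ∘ v) + (t - z i) • ee v i) (ee v i) (z i) := by
    have h0 : HasDerivAt (fun t : ℝ => t - z i) 1 (z i) := (hasDerivAt_id _).sub_const _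
    simpa using (h0.smul_const (ee v i)).const_add (z ∘ v)
  have h2 : HasFDerivAt G (fderiv ℝ G (z ∘ v)) ((fun t : ℝ => (z ∘ v) + (t - z i) • ee v i) (z i)) := by
    simp only [sub_self, zero_smul, add_zero]
    exact ((hG.differentiable (by simp)) (z ∘ v)).hasFDerivAt
  have h3 := h2.comp_hasDerivAt (z i) h1
  have heq : (fun t => G ((Function.update z i t) ∘ v))
      = fun t => G ((z ∘ v) + (t - z i) • ee v i) := by
    funext t; rw [update_comp]
  rw [heq]
  exact h3

lemma contDiff_dg (hg : ContDiff ℝ (⊤ : ℕ∞) g) (i : J) :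
    ContDiff ℝ (⊤ : ℕ∞) (fun y => fderiv ℝ g y (ee v i)) :=
  (hg.fderiv_right (by simp)).clm_apply contDiff_const

lemma pd_FF (hg : ContDiff ℝ (⊤ : ℕ∞) g) (i : J) (z : J → ℝ) : pd i (FF v g) z = P1 v g i z :=
  (hasDerivAt_cyl_s9 v hg z i).deriv

lemma hasDerivAt_P1 (hg : ContDiff ℝ (⊤ : ℕ∞) g) (i j : J) (z : J → ℝ) :
    HasDerivAt (fun t => P1 v g i (Function.update z j t)) (P2 v g j i z) (z j) :=
  hasDerivAt_cyl_s9 v (contDiff_dg v g hg i) z j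

lemma P2_symm (hg : ContDiff ℝ (⊤ : ℕ∞) g) (i j : J) (z : J → ℝ) :
    P2 v g i j z = P2 v g j i z := by
  have hdg : ∀ y, HasFDerivAt g (fderiv ℝ g y) y :=
    fun y => ((hg.differentiable (by simp)) y).hasFDerivAt
  have hF' : DifferentiableAt ℝ (fderiv ℝ g) (z ∘ v) :=
    ((hg.fderiv_right (m := 1) (by exact WithTop.coe_le_coe.2 le_top)).differentiable (by simp)) (z ∘ v)
  have hsym := second_derivative_symmetric hdg hF'.hasFDerivAt (ee v i) (ee v j)
  have key : ∀ w a : Fin n → ℝ, fderiv ℝ (fun y => fderiv ℝ g y w) (z ∘ v) a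
      = (fderiv ℝ (fderiv ℝ g) (z ∘ v)) a w := by
    intro w a
    rw [fderiv_clm_apply hF' (differentiableAt_const w)]
    simp
  unfold P2
  rw [key, key, hsym]

lemma ee_zero {N : ℕ} (hN : ∀ k, (v k).2 < N) {i : J} (hi : N ≤ i.2) : ee v i = 0 := by
  funext k
  simp only [ee, Pi.zero_apply]
  rw [if_neg]
  intro h
  exact absurd (h ▸ hN k) (not_lt.2 hi)

lemma P1_zero {N : ℕ} (hN : ∀ k, (v k).2 < N) {i : J} (hi : N ≤ i.2) (z : J → ℝ) :
    P1 v g i z = 0 := by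
  unfold P1; rw [ee_zero v hN hi, map_zero]

lemma P2_zero_left {N : ℕ} (hN : ∀ k, (v k).2 < N) {i : J} (hi : N ≤ i.2) (j : J) (z : J → ℝ) :
    P2 v g i j z = 0 := by
  unfold P2; rw [ee_zero v hN hi, map_zero]

lemma hasDerivAt_coord (z : J → ℝ) (a j : J) :
    HasDerivAt (fun t => Function.update z j t a) (if a = j then 1 else 0) (z j) := by
  rcases eq_or_ne a j with rfl | h
  · simp only [Function.update_self, if_pos rfl]
    exact hasDerivAt_id (z a)
  · simp only [if_neg h]
    have : (fun t => Function.update z j t a) = fun _ => z a := by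
      funext t; exact Function.update_of_ne h t z
    rw [this]
    exact hasDerivAt_const _ _

lemma tsum_range_eq (F : ℕ → ℝ) (M : ℕ) (h : ∀ k, M ≤ k → F k = 0) :
    ∑' k, F k = ∑ k ∈ Finset.range M, F k :=
  tsum_eq_sum (fun b hb => h b (Nat.le_of_not_lt (fun hlt => hb (Finset.mem_range.2 hlt))))

end aux

section aux2
variable {n : ℕ} (v : Fin n → J) (g : (Fin n → ℝ) → ℝ)

lemma c_congr : ∀ (j : ℕ) (z z' : J → ℝ), (∀ m, z (uu m) = z' (uu m)) → c j z = c j z' := by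
  intro j
  induction j with
  | zero =>
    intro z z' h
    show z (uu 0) * z (uu 1) = z' (uu 0) * z' (uu 1)
    rw [h 0, h 1]
  | succ j ih =>
    intro z z' h
    show Xop (c j) z = Xop (c j) z'
    unfold Xop
    refine tsum_congr fun k => ?_
    have hvu : ∀ (w : J → ℝ) (m : ℕ), pd (vv m) (c j) w = 0 := by
      intro w m
      unfold pd
      have hconst : (fun t => c j (Function.update w (vv m) t)) = fun _ => c j w := by
        funext t
        exact ih _ _ fun m' => Function.update_of_ne (uu_ne_vv m' m) t w
      rw [hconst, deriv_const]
    have huu : pd (uu k) (c j) z = pd (uu k) (c j) z' := by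
      unfold pd
      have h2 : (fun t => c j (Function.update z (uu k) t))
          = fun t => c j (Function.update z' (uu k) t) := by
        funext t
        refine ih _ _ fun m => ?_
        rcases eq_or_ne m k with rfl | hm
        · simp
        · have hne : uu m ≠ uu k := by simp [uu_eq_uu, hm]
          rw [Function.update_of_ne hne, Function.update_of_ne hne, h m]
      rw [h2, h k]
    rw [huu, hvu z, hvu z', mul_zero, mul_zero, h (k+1)]

lemma c_update_vv (j : ℕ) (z : J → ℝ) (m : ℕ) (t : ℝ) :
    c j (Function.update z (vv m) t) = c j z :=
  c_congr j _ _ fun m' => Function.update_of_ne (uu_ne_vv m' m) t z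

variable {N : ℕ}

/-- reduction of `Xop` on a cylinder function. -/
lemma O1 (hg : ContDiff ℝ (⊤ : ℕ∞) g) (hN : ∀ k, (v k).2 < N) (z : J → ℝ) :
    Xop (FF v g) z = ∑ k ∈ Finset.range (N+1),
      (z (uu (k+1)) * P1 v g (uu k) z + z (vv (k+1)) * P1 v g (vv k) z) := by
  unfold Xop
  rw [tsum_congr (fun k : ℕ => by
    rw [pd_FF v g hg, pd_FF v g hg] :
    ∀ k : ℕ, z (uu (k+1)) * pd (uu k) (FF v g) z + z (vv (k+1)) * pd (vv k) (FF v g) z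
      = z (uu (k+1)) * P1 v g (uu k) z + z (vv (k+1)) * P1 v g (vv k) z)]
  refine tsum_range_eq _ _ fun k hk => ?_
  have hk' : N ≤ k := le_trans (Nat.le_succ N) hk
  rw [P1_zero v g hN hk', P1_zero v g hN hk']
  ring

lemma O2 (hg : ContDiff ℝ (⊤ : ℕ∞) g) (hN : ∀ k, (v k).2 < N) (z : J → ℝ) :
    X13op (FF v g) z = 12 * ∑ k ∈ Finset.range (N+1),
      z (uu (k+1)) * P1 v g (vv (k+1)) z := by
  unfold X13op
  rw [tsum_congr (fun k : ℕ => by rw [pd_FF v g hg] :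
    ∀ k : ℕ, z (uu (k+1)) * pd (vv (k+1)) (FF v g) z = z (uu (k+1)) * P1 v g (vv (k+1)) z)]
  rw [tsum_range_eq _ (N+1) fun k hk => ?_]
  rw [P1_zero v g hN (le_trans (le_trans (Nat.le_succ N) hk) (Nat.le_succ k)), mul_zero]

lemma O3 (hg : ContDiff ℝ (⊤ : ℕ∞) g) (hN : ∀ k, (v k).2 < N) (z : J → ℝ) :
    X3op (FF v g) z = ∑ k ∈ Finset.range (N+1),
      (z (vv (k+1)) * P1 v g (uu (k+1)) z + 12 * c k z * P1 v g (vv (k+1)) z) := by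
  unfold X3op
  rw [tsum_congr (fun k : ℕ => by rw [pd_FF v g hg, pd_FF v g hg] :
    ∀ k : ℕ, z (vv (k+1)) * pd (uu (k+1)) (FF v g) z + 12 * c k z * pd (vv (k+1)) (FF v g) z
      = z (vv (k+1)) * P1 v g (uu (k+1)) z + 12 * c k z * P1 v g (vv (k+1)) z)]
  refine tsum_range_eq _ _ fun k hk => ?_
  have hk' : N ≤ k + 1 := le_trans (le_trans (Nat.le_succ N) hk) (Nat.le_succ k)
  rw [P1_zero v g hN hk', P1_zero v g hN hk']
  ring

lemma O4 (hg : ContDiff ℝ (⊤ : ℕ∞) g) (hN : ∀ k, (v k).2 < N) (z : J → ℝ) :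
    X313op (FF v g) z = 12 * ∑ k ∈ Finset.range (N+1),
      (z (vv (k+1)) * P1 v g (vv (k+1)) z - z (uu (k+1)) * P1 v g (uu (k+1)) z) := by
  unfold X313op
  rw [tsum_congr (fun k : ℕ => by rw [pd_FF v g hg, pd_FF v g hg] :
    ∀ k : ℕ, z (vv (k+1)) * pd (vv (k+1)) (FF v g) z - z (uu (k+1)) * pd (uu (k+1)) (FF v g) z
      = z (vv (k+1)) * P1 v g (vv (k+1)) z - z (uu (k+1)) * P1 v g (uu (k+1)) z)]
  rw [tsum_range_eq _ (N+1) fun k hk => ?_]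
  have hk' : N ≤ k + 1 := le_trans (le_trans (Nat.le_succ N) hk) (Nat.le_succ k)
  rw [P1_zero v g hN hk', P1_zero v g hN hk']
  ring

end aux2

section aux3
variable {n : ℕ} (v : Fin n → J) (g : (Fin n → ℝ) → ℝ) {N : ℕ}

lemma pd_X13 (hg : ContDiff ℝ (⊤ : ℕ∞) g) (hN : ∀ k, (v k).2 < N) (j : J) (z : J → ℝ) :
    pd j (X13op (FF v g)) z = 12 * ∑ k ∈ Finset.range (N+1),
      ((if uu (k+1) = j then 1 else 0) * P1 v g (vv (k+1)) z
        + z (uu (k+1)) * P2 v g j (vv (k+1)) z) := by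
  have hrw : (fun t => X13op (FF v g) (Function.update z j t))
      = fun t => 12 * ∑ k ∈ Finset.range (N+1),
          (Function.update z j t) (uu (k+1)) * P1 v g (vv (k+1)) (Function.update z j t) :=
    funext fun t => O2 v g hg hN _
  unfold pd
  rw [hrw]
  refine HasDerivAt.deriv ?_
  refine HasDerivAt.const_mul 12 (HasDerivAt.fun_sum fun k _ => ?_)
  have h1 := (hasDerivAt_coord z (uu (k+1)) j).fun_mul (hasDerivAt_P1 v g hg (vv (k+1)) j z)
  simpa using h1

lemma pd_X3 (hg : ContDiff ℝ (⊤ : ℕ∞) g) (hN : ∀ k, (v k).2 < N) (m : ℕ) (z : J → ℝ) :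
    pd (vv (m+1)) (X3op (FF v g)) z = ∑ j ∈ Finset.range (N+1),
      ((if vv (j+1) = vv (m+1) then 1 else 0) * P1 v g (uu (j+1)) z
        + z (vv (j+1)) * P2 v g (vv (m+1)) (uu (j+1)) z
        + 12 * c j z * P2 v g (vv (m+1)) (vv (j+1)) z) := by
  have hrw : (fun t => X3op (FF v g) (Function.update z (vv (m+1)) t))
      = fun t => ∑ j ∈ Finset.range (N+1),
          ((Function.update z (vv (m+1)) t) (vv (j+1))
              * P1 v g (uu (j+1)) (Function.update z (vv (m+1)) t)
            + 12 * c j z * P1 v g (vv (j+1)) (Function.update z (vv (m+1)) t)) := by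
    funext t
    rw [O3 v g hg hN]
    exact Finset.sum_congr rfl fun j _ => by rw [c_update_vv]
  unfold pd
  rw [hrw]
  refine HasDerivAt.deriv (HasDerivAt.fun_sum fun j _ => ?_)
  have h1 := (hasDerivAt_coord z (vv (j+1)) (vv (m+1))).fun_mul
    (hasDerivAt_P1 v g hg (uu (j+1)) (vv (m+1)) z)
  have h2 := (hasDerivAt_P1 v g hg (vv (j+1)) (vv (m+1)) z).const_mul (12 * c j z)
  simpa using h1.fun_add h2

lemma pd_X (hg : ContDiff ℝ (⊤ : ℕ∞) g) (hN : ∀ k, (v k).2 < N) (j' : J) (z : J → ℝ) :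
    pd j' (Xop (FF v g)) z = ∑ k ∈ Finset.range (N+1),
      (((if uu (k+1) = j' then 1 else 0) * P1 v g (uu k) z
          + z (uu (k+1)) * P2 v g j' (uu k) z)
        + ((if vv (k+1) = j' then 1 else 0) * P1 v g (vv k) z
          + z (vv (k+1)) * P2 v g j' (vv k) z)) := by
  have hrw : (fun t => Xop (FF v g) (Function.update z j' t))
      = fun t => ∑ k ∈ Finset.range (N+1),
          ((Function.update z j' t) (uu (k+1)) * P1 v g (uu k) (Function.update z j' t)
            + (Function.update z j' t) (vv (k+1)) * P1 v g (vv k) (Function.update z j' t)) :=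
    funext fun t => O1 v g hg hN _
  unfold pd
  rw [hrw]
  refine HasDerivAt.deriv (HasDerivAt.fun_sum fun k _ => ?_)
  have h1 := (hasDerivAt_coord z (uu (k+1)) j').fun_mul (hasDerivAt_P1 v g hg (uu k) j' z)
  have h2 := (hasDerivAt_coord z (vv (k+1)) j').fun_mul (hasDerivAt_P1 v g hg (vv k) j' z)
  simpa using h1.fun_add h2

lemma pd_X313 (hg : ContDiff ℝ (⊤ : ℕ∞) g) (hN : ∀ k, (v k).2 < N) (j' : J) (z : J → ℝ) :
    pd j' (X313op (FF v g)) z = 12 * ∑ k ∈ Finset.range (N+1),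
      (((if vv (k+1) = j' then 1 else 0) * P1 v g (vv (k+1)) z
          + z (vv (k+1)) * P2 v g j' (vv (k+1)) z)
        - ((if uu (k+1) = j' then 1 else 0) * P1 v g (uu (k+1)) z
          + z (uu (k+1)) * P2 v g j' (uu (k+1)) z)) := by
  have hrw : (fun t => X313op (FF v g) (Function.update z j' t))
      = fun t => 12 * ∑ k ∈ Finset.range (N+1),
          ((Function.update z j' t) (vv (k+1)) * P1 v g (vv (k+1)) (Function.update z j' t)
            - (Function.update z j' t) (uu (k+1)) * P1 v g (uu (k+1)) (Function.update z j' t)) :=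
    funext fun t => O4 v g hg hN _
  unfold pd
  rw [hrw]
  refine HasDerivAt.deriv (HasDerivAt.const_mul 12 (HasDerivAt.fun_sum fun k _ => ?_))
  have h1 := (hasDerivAt_coord z (vv (k+1)) j').fun_mul (hasDerivAt_P1 v g hg (vv (k+1)) j' z)
  have h2 := (hasDerivAt_coord z (uu (k+1)) j').fun_mul (hasDerivAt_P1 v g hg (uu (k+1)) j' z)
  simpa using h1.fun_sub h2

end aux3

section aux4
variable {n : ℕ} (v : Fin n → J) (g : (Fin n → ℝ) → ℝ) {N : ℕ}

lemma redA (hg : ContDiff ℝ (⊤ : ℕ∞) g) (hN : ∀ k, (v k).2 < N) (z : J → ℝ) :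
    X3op (X13op (FF v g)) z = ∑ j ∈ Finset.range (N+1),
      (z (vv (j+1)) * pd (uu (j+1)) (X13op (FF v g)) z
        + 12 * c j z * pd (vv (j+1)) (X13op (FF v g)) z) := by
  unfold X3op
  refine tsum_range_eq _ _ fun j hj => ?_
  have hj1 : N ≤ (uu (j+1)).2 := le_trans (Nat.le_succ N) (Nat.succ_le_succ (le_trans (Nat.le_succ N) hj))
  have hj2 : N ≤ (vv (j+1)).2 := hj1
  rw [pd_X13 v g hg hN, pd_X13 v g hg hN]
  rw [Finset.sum_eq_zero fun k hk => ?_, Finset.sum_eq_zero fun k hk => ?_]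
  · ring
  · rw [if_neg, P2_zero_left v g hN hj2, zero_mul, mul_zero, add_zero]
    simp only [uu_eq_vv]
    exact not_false
  · rw [if_neg, P2_zero_left v g hN hj1, zero_mul, mul_zero, add_zero]
    rw [uu_eq_uu]
    have : k < N + 1 := Finset.mem_range.1 hk
    omega

lemma redB (hg : ContDiff ℝ (⊤ : ℕ∞) g) (hN : ∀ k, (v k).2 < N) (z : J → ℝ) :
    X13op (X3op (FF v g)) z = 12 * ∑ m ∈ Finset.range (N+1),
      z (uu (m+1)) * pd (vv (m+1)) (X3op (FF v g)) z := by
  unfold X13op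
  rw [tsum_range_eq _ (N+1) fun m hm => ?_]
  rw [pd_X3 v g hg hN]
  have hm1 : N ≤ (vv (m+1)).2 := le_trans (Nat.le_succ N) (Nat.succ_le_succ (le_trans (Nat.le_succ N) hm))
  rw [Finset.sum_eq_zero fun j hj => ?_, mul_zero]
  rw [if_neg, P2_zero_left v g hN hm1, P2_zero_left v g hN hm1, zero_mul, mul_zero, mul_zero,
    add_zero, add_zero]
  rw [vv_eq_vv]
  have : j < N + 1 := Finset.mem_range.1 hj
  omega

lemma redC (hg : ContDiff ℝ (⊤ : ℕ∞) g) (hN : ∀ k, (v k).2 < N) (z : J → ℝ) :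
    Xop (X313op (FF v g)) z = ∑ j ∈ Finset.range (N+1),
      (z (uu (j+1)) * pd (uu j) (X313op (FF v g)) z
        + z (vv (j+1)) * pd (vv j) (X313op (FF v g)) z) := by
  unfold Xop
  refine tsum_range_eq _ _ fun j hj => ?_
  have hju : N ≤ (uu j).2 := le_trans (Nat.le_succ N) hj
  have hjv : N ≤ (vv j).2 := hju
  rw [pd_X313 v g hg hN, pd_X313 v g hg hN]
  rw [Finset.sum_eq_zero fun k hk => ?_, Finset.sum_eq_zero fun k hk => ?_]
  · ring
  · -- vv j case
    have hk' : k < N + 1 := Finset.mem_range.1 hk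
    rw [P2_zero_left v g hN hjv, P2_zero_left v g hN hjv, mul_zero, mul_zero]
    rcases eq_or_ne (k+1) j with he | hne
    · rw [if_pos ((vv_eq_vv _ _).2 he), if_neg (uu_ne_vv (k+1) j),
        P1_zero v g hN (show N ≤ (vv (k+1)).2 from he ▸ hjv) z]
      ring
    · rw [if_neg (fun h => hne ((vv_eq_vv _ _).1 h)), if_neg (uu_ne_vv (k+1) j)]
      ring
  · -- uu j case
    have hk' : k < N + 1 := Finset.mem_range.1 hk
    rw [P2_zero_left v g hN hju, P2_zero_left v g hN hju, mul_zero, mul_zero]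
    rcases eq_or_ne (k+1) j with he | hne
    · rw [if_pos ((uu_eq_uu _ _).2 he), if_neg (vv_ne_uu (k+1) j),
        P1_zero v g hN (show N ≤ (uu (k+1)).2 from he ▸ hju) z]
      ring
    · rw [if_neg (fun h => hne ((uu_eq_uu _ _).1 h)), if_neg (vv_ne_uu (k+1) j)]
      ring

lemma redD (hg : ContDiff ℝ (⊤ : ℕ∞) g) (hN : ∀ k, (v k).2 < N) (z : J → ℝ) :
    X313op (Xop (FF v g)) z = 12 * ∑ j ∈ Finset.range (N+1),
      (z (vv (j+1)) * pd (vv (j+1)) (Xop (FF v g)) z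
        - z (uu (j+1)) * pd (uu (j+1)) (Xop (FF v g)) z) := by
  unfold X313op
  rw [tsum_range_eq _ (N+1) fun j hj => ?_]
  have hj1 : N ≤ (uu (j+1)).2 := le_trans (Nat.le_succ N) (Nat.succ_le_succ (le_trans (Nat.le_succ N) hj))
  have hj2 : N ≤ (vv (j+1)).2 := hj1
  rw [pd_X v g hg hN, pd_X v g hg hN]
  rw [Finset.sum_eq_zero fun k hk => ?_, Finset.sum_eq_zero fun k hk => ?_]
  · ring
  · have hk' : k < N + 1 := Finset.mem_range.1 hk
    rw [P2_zero_left v g hN hj1, P2_zero_left v g hN hj1, mul_zero, mul_zero]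
    rw [if_neg (show ¬uu (k+1) = uu (j+1) by rw [uu_eq_uu]; omega),
      if_neg (vv_ne_uu (k+1) (j+1))]
    ring
  · have hk' : k < N + 1 := Finset.mem_range.1 hk
    rw [P2_zero_left v g hN hj2, P2_zero_left v g hN hj2, mul_zero, mul_zero]
    rw [if_neg (uu_ne_vv (k+1) (j+1)),
      if_neg (show ¬vv (k+1) = vv (j+1) by rw [vv_eq_vv]; omega)]
    ring

end aux4

section aux5
variable {n : ℕ} (v : Fin n → J) (g : (Fin n → ℝ) → ℝ) {N : ℕ}

lemma dsum_delta {M : ℕ} (j : ℕ) (hj : j < M) (P : ℕ → Prop) [DecidablePred P]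
    (hP : ∀ k, P k ↔ k = j) (w q : ℕ → ℝ) :
    ∑ k ∈ Finset.range M, ((if P k then (1:ℝ) else 0) * w k + q k)
      = w j + ∑ k ∈ Finset.range M, q k := by
  rw [Finset.sum_add_distrib]
  congr 1
  have e : ∀ k, (if P k then (1:ℝ) else 0) * w k = if k = j then w k else 0 := by
    intro k
    by_cases h : P k
    · rw [if_pos h, if_pos ((hP k).1 h), one_mul]
    · rw [if_neg h, if_neg (fun hh => h ((hP k).2 hh)), zero_mul]
  rw [Finset.sum_congr rfl fun k _ => e k, Finset.sum_ite_eq' (Finset.range M) j w,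
    if_pos (Finset.mem_range.2 hj)]

lemma dsum_false {M : ℕ} (P : ℕ → Prop) [DecidablePred P] (hP : ∀ k, ¬ P k) (w q : ℕ → ℝ) :
    ∑ k ∈ Finset.range M, ((if P k then (1:ℝ) else 0) * w k + q k)
      = ∑ k ∈ Finset.range M, q k :=
  Finset.sum_congr rfl fun k _ => by rw [if_neg (hP k), zero_mul, zero_add]

lemma id1 (hg : ContDiff ℝ (⊤ : ℕ∞) g) (hN : ∀ k, (v k).2 < N) (z : J → ℝ) :
    X3op (X13op (FF v g)) z - X13op (X3op (FF v g)) z = X313op (FF v g) z := by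
  have htermA : ∀ j ∈ Finset.range (N+1),
      z (vv (j+1)) * pd (uu (j+1)) (X13op (FF v g)) z
        + 12 * c j z * pd (vv (j+1)) (X13op (FF v g)) z
      = 12 * (z (vv (j+1)) * P1 v g (vv (j+1)) z)
        + 12 * (z (vv (j+1)) * ∑ k ∈ Finset.range (N+1),
            z (uu (k+1)) * P2 v g (uu (j+1)) (vv (k+1)) z)
        + 144 * (c j z * ∑ k ∈ Finset.range (N+1),
            z (uu (k+1)) * P2 v g (vv (j+1)) (vv (k+1)) z) := by
    intro j hj
    rw [pd_X13 v g hg hN, pd_X13 v g hg hN]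
    rw [dsum_delta j (Finset.mem_range.1 hj) (fun k => uu (k+1) = uu (j+1))
      (fun k => by show uu (k+1) = uu (j+1) ↔ k = j; rw [uu_eq_uu]; omega) (fun k => P1 v g (vv (k+1)) z)
      (fun k => z (uu (k+1)) * P2 v g (uu (j+1)) (vv (k+1)) z)]
    rw [dsum_false (fun k => uu (k+1) = vv (j+1)) (fun k => uu_ne_vv _ _)
      (fun k => P1 v g (vv (k+1)) z)
      (fun k => z (uu (k+1)) * P2 v g (vv (j+1)) (vv (k+1)) z)]
    ring
  have htermB : ∀ k ∈ Finset.range (N+1),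
      z (uu (k+1)) * pd (vv (k+1)) (X3op (FF v g)) z
      = z (uu (k+1)) * P1 v g (uu (k+1)) z
        + z (uu (k+1)) * ∑ j ∈ Finset.range (N+1),
            z (vv (j+1)) * P2 v g (vv (k+1)) (uu (j+1)) z
        + z (uu (k+1)) * ∑ j ∈ Finset.range (N+1),
            12 * c j z * P2 v g (vv (k+1)) (vv (j+1)) z := by
    intro k hk
    rw [pd_X3 v g hg hN]
    have e : ∀ j : ℕ,
        (if vv (j+1) = vv (k+1) then (1:ℝ) else 0) * P1 v g (uu (j+1)) z
          + z (vv (j+1)) * P2 v g (vv (k+1)) (uu (j+1)) z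
          + 12 * c j z * P2 v g (vv (k+1)) (vv (j+1)) z
        = (if vv (j+1) = vv (k+1) then (1:ℝ) else 0) * P1 v g (uu (j+1)) z
          + (z (vv (j+1)) * P2 v g (vv (k+1)) (uu (j+1)) z
            + 12 * c j z * P2 v g (vv (k+1)) (vv (j+1)) z) := fun j => by ring
    rw [Finset.sum_congr rfl fun j _ => e j]
    rw [dsum_delta k (Finset.mem_range.1 hk) (fun j => vv (j+1) = vv (k+1))
      (fun j => by show vv (j+1) = vv (k+1) ↔ j = k; rw [vv_eq_vv]; omega) (fun j => P1 v g (uu (j+1)) z)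
      (fun j => z (vv (j+1)) * P2 v g (vv (k+1)) (uu (j+1)) z
        + 12 * c j z * P2 v g (vv (k+1)) (vv (j+1)) z)]
    rw [Finset.sum_add_distrib]
    ring
  have keyS : ∑ j ∈ Finset.range (N+1), 12 * (z (vv (j+1)) * ∑ k ∈ Finset.range (N+1),
        z (uu (k+1)) * P2 v g (uu (j+1)) (vv (k+1)) z)
      = 12 * ∑ k ∈ Finset.range (N+1), z (uu (k+1)) * ∑ j ∈ Finset.range (N+1),
          z (vv (j+1)) * P2 v g (vv (k+1)) (uu (j+1)) z := by
    simp only [Finset.mul_sum]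
    rw [Finset.sum_comm]
    refine Finset.sum_congr rfl fun k _ => Finset.sum_congr rfl fun j _ => ?_
    rw [P2_symm v g hg (uu (j+1)) (vv (k+1))]
    ring
  have keyT : ∑ j ∈ Finset.range (N+1), 144 * (c j z * ∑ k ∈ Finset.range (N+1),
        z (uu (k+1)) * P2 v g (vv (j+1)) (vv (k+1)) z)
      = 12 * ∑ k ∈ Finset.range (N+1), z (uu (k+1)) * ∑ j ∈ Finset.range (N+1),
          12 * c j z * P2 v g (vv (k+1)) (vv (j+1)) z := by
    simp only [Finset.mul_sum]
    rw [Finset.sum_comm]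
    refine Finset.sum_congr rfl fun k _ => Finset.sum_congr rfl fun j _ => ?_
    rw [P2_symm v g hg (vv (j+1)) (vv (k+1))]
    ring
  rw [redA v g hg hN, redB v g hg hN, O4 v g hg hN]
  rw [Finset.sum_congr rfl htermA, Finset.sum_congr rfl htermB]
  rw [Finset.sum_add_distrib, Finset.sum_add_distrib, Finset.sum_add_distrib,
    Finset.sum_add_distrib, Finset.sum_sub_distrib]
  rw [keyS, keyT]
  rw [show ∑ j ∈ Finset.range (N+1), 12 * (z (vv (j+1)) * P1 v g (vv (j+1)) z)
      = 12 * ∑ j ∈ Finset.range (N+1), z (vv (j+1)) * P1 v g (vv (j+1)) z by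
    rw [Finset.mul_sum]]
  ring

end aux5

section aux6
variable {n : ℕ} (v : Fin n → J) (g : (Fin n → ℝ) → ℝ) {N : ℕ}

lemma shift_sum (G : ℕ → ℕ → ℝ) :
    ∑ j ∈ Finset.range (N+1), ∑ k ∈ Finset.range (N+1), (if k + 1 = j then G j k else 0)
      = ∑ k ∈ Finset.range N, G (k+1) k := by
  rw [Finset.sum_comm]
  have e0 : ∀ k j : ℕ, (if k + 1 = j then G j k else 0) = if j = k + 1 then G j k else 0 := by
    intro k j
    by_cases h : k + 1 = j
    · rw [if_pos h, if_pos h.symm]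
    · rw [if_neg h, if_neg (fun hh => h hh.symm)]
  have e1 : ∀ k ∈ Finset.range (N+1),
      ∑ j ∈ Finset.range (N+1), (if k + 1 = j then G j k else 0)
        = if k ∈ Finset.range N then G (k+1) k else 0 := by
    intro k _
    rw [Finset.sum_congr rfl fun j _ => e0 k j,
      Finset.sum_ite_eq' (Finset.range (N+1)) (k+1) (fun j => G j k)]
    by_cases h : k < N
    · rw [if_pos (Finset.mem_range.2 (by omega)), if_pos (Finset.mem_range.2 h)]
    · rw [if_neg (fun hh => h (by have := Finset.mem_range.1 hh; omega)),
        if_neg (fun hh => h (Finset.mem_range.1 hh))]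
  rw [Finset.sum_congr rfl e1, Finset.sum_ite_mem,
    Finset.inter_eq_right.2 (Finset.range_subset_range.2 (Nat.le_succ N))]

lemma id2 (hg : ContDiff ℝ (⊤ : ℕ∞) g) (hN : ∀ k, (v k).2 < N) (z : J → ℝ) :
    Xop (X313op (FF v g)) z - X313op (Xop (FF v g)) z
      = 12 * z (uu 1) * P1 v g (uu 0) z - 12 * z (vv 1) * P1 v g (vv 0) z := by
  have htermC : ∀ j ∈ Finset.range (N+1),
      z (uu (j+1)) * pd (uu j) (X313op (FF v g)) z
        + z (vv (j+1)) * pd (vv j) (X313op (FF v g)) z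
      = 12 * (z (uu (j+1)) * ∑ k ∈ Finset.range (N+1),
            z (vv (k+1)) * P2 v g (uu j) (vv (k+1)) z)
        - 12 * (z (uu (j+1)) * ∑ k ∈ Finset.range (N+1),
            z (uu (k+1)) * P2 v g (uu j) (uu (k+1)) z)
        - 12 * (z (uu (j+1)) * ∑ k ∈ Finset.range (N+1),
            (if k + 1 = j then P1 v g (uu (k+1)) z else 0))
        + 12 * (z (vv (j+1)) * ∑ k ∈ Finset.range (N+1),
            z (vv (k+1)) * P2 v g (vv j) (vv (k+1)) z)
        - 12 * (z (vv (j+1)) * ∑ k ∈ Finset.range (N+1),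
            z (uu (k+1)) * P2 v g (vv j) (uu (k+1)) z)
        + 12 * (z (vv (j+1)) * ∑ k ∈ Finset.range (N+1),
            (if k + 1 = j then P1 v g (vv (k+1)) z else 0)) := by
    intro j hj
    rw [pd_X313 v g hg hN, pd_X313 v g hg hN]
    have e1 : ∀ k : ℕ,
        ((if vv (k+1) = uu j then (1:ℝ) else 0) * P1 v g (vv (k+1)) z
            + z (vv (k+1)) * P2 v g (uu j) (vv (k+1)) z)
          - ((if uu (k+1) = uu j then (1:ℝ) else 0) * P1 v g (uu (k+1)) z
            + z (uu (k+1)) * P2 v g (uu j) (uu (k+1)) z)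
        = (z (vv (k+1)) * P2 v g (uu j) (vv (k+1)) z
            - z (uu (k+1)) * P2 v g (uu j) (uu (k+1)) z)
          - (if k + 1 = j then P1 v g (uu (k+1)) z else 0) := by
      intro k
      rw [if_neg (vv_ne_uu (k+1) j)]
      by_cases h : k + 1 = j
      · rw [if_pos ((uu_eq_uu (k+1) j).2 h), if_pos h]; ring
      · rw [if_neg (fun hh => h ((uu_eq_uu (k+1) j).1 hh)), if_neg h]; ring
    have e2 : ∀ k : ℕ,
        ((if vv (k+1) = vv j then (1:ℝ) else 0) * P1 v g (vv (k+1)) z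
            + z (vv (k+1)) * P2 v g (vv j) (vv (k+1)) z)
          - ((if uu (k+1) = vv j then (1:ℝ) else 0) * P1 v g (uu (k+1)) z
            + z (uu (k+1)) * P2 v g (vv j) (uu (k+1)) z)
        = (z (vv (k+1)) * P2 v g (vv j) (vv (k+1)) z
            - z (uu (k+1)) * P2 v g (vv j) (uu (k+1)) z)
          + (if k + 1 = j then P1 v g (vv (k+1)) z else 0) := by
      intro k
      rw [if_neg (uu_ne_vv (k+1) j)]
      by_cases h : k + 1 = j
      · rw [if_pos ((vv_eq_vv (k+1) j).2 h), if_pos h]; ring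
      · rw [if_neg (fun hh => h ((vv_eq_vv (k+1) j).1 hh)), if_neg h]; ring
    rw [Finset.sum_congr rfl fun k _ => e1 k, Finset.sum_congr rfl fun k _ => e2 k]
    rw [Finset.sum_sub_distrib, Finset.sum_add_distrib, Finset.sum_sub_distrib,
      Finset.sum_sub_distrib]
    ring
  have htermD : ∀ j ∈ Finset.range (N+1),
      z (vv (j+1)) * pd (vv (j+1)) (Xop (FF v g)) z
        - z (uu (j+1)) * pd (uu (j+1)) (Xop (FF v g)) z
      = (z (vv (j+1)) * P1 v g (vv j) z - z (uu (j+1)) * P1 v g (uu j) z)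
        + z (vv (j+1)) * ∑ k ∈ Finset.range (N+1),
            z (uu (k+1)) * P2 v g (vv (j+1)) (uu k) z
        + z (vv (j+1)) * ∑ k ∈ Finset.range (N+1),
            z (vv (k+1)) * P2 v g (vv (j+1)) (vv k) z
        - z (uu (j+1)) * ∑ k ∈ Finset.range (N+1),
            z (uu (k+1)) * P2 v g (uu (j+1)) (uu k) z
        - z (uu (j+1)) * ∑ k ∈ Finset.range (N+1),
            z (vv (k+1)) * P2 v g (uu (j+1)) (vv k) z := by
    intro j hj
    rw [pd_X v g hg hN, pd_X v g hg hN]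
    have e3 : ∀ k : ℕ,
        ((if uu (k+1) = vv (j+1) then (1:ℝ) else 0) * P1 v g (uu k) z
            + z (uu (k+1)) * P2 v g (vv (j+1)) (uu k) z)
          + ((if vv (k+1) = vv (j+1) then (1:ℝ) else 0) * P1 v g (vv k) z
            + z (vv (k+1)) * P2 v g (vv (j+1)) (vv k) z)
        = (z (uu (k+1)) * P2 v g (vv (j+1)) (uu k) z
            + z (vv (k+1)) * P2 v g (vv (j+1)) (vv k) z)
          + (if k = j then P1 v g (vv k) z else 0) := by
      intro k
      rw [if_neg (uu_ne_vv (k+1) (j+1))]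
      by_cases h : k = j
      · rw [if_pos ((vv_eq_vv (k+1) (j+1)).2 (by omega)), if_pos h]; ring
      · rw [if_neg (fun hh => h (by have := (vv_eq_vv (k+1) (j+1)).1 hh; omega)), if_neg h]; ring
    have e4 : ∀ k : ℕ,
        ((if uu (k+1) = uu (j+1) then (1:ℝ) else 0) * P1 v g (uu k) z
            + z (uu (k+1)) * P2 v g (uu (j+1)) (uu k) z)
          + ((if vv (k+1) = uu (j+1) then (1:ℝ) else 0) * P1 v g (vv k) z
            + z (vv (k+1)) * P2 v g (uu (j+1)) (vv k) z)
        = (z (uu (k+1)) * P2 v g (uu (j+1)) (uu k) z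
            + z (vv (k+1)) * P2 v g (uu (j+1)) (vv k) z)
          + (if k = j then P1 v g (uu k) z else 0) := by
      intro k
      rw [if_neg (vv_ne_uu (k+1) (j+1))]
      by_cases h : k = j
      · rw [if_pos ((uu_eq_uu (k+1) (j+1)).2 (by omega)), if_pos h]; ring
      · rw [if_neg (fun hh => h (by have := (uu_eq_uu (k+1) (j+1)).1 hh; omega)), if_neg h]; ring
    rw [Finset.sum_congr rfl fun k _ => e3 k, Finset.sum_congr rfl fun k _ => e4 k]
    rw [Finset.sum_add_distrib, Finset.sum_add_distrib, Finset.sum_add_distrib,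
      Finset.sum_add_distrib,
      Finset.sum_ite_eq' (Finset.range (N+1)) j (fun k => P1 v g (vv k) z),
      Finset.sum_ite_eq' (Finset.range (N+1)) j (fun k => P1 v g (uu k) z),
      if_pos hj, if_pos hj]
    ring
  have K1 : ∑ j ∈ Finset.range (N+1), 12 * (z (uu (j+1)) * ∑ k ∈ Finset.range (N+1),
        z (vv (k+1)) * P2 v g (uu j) (vv (k+1)) z)
      = 12 * ∑ j ∈ Finset.range (N+1), z (vv (j+1)) * ∑ k ∈ Finset.range (N+1),
          z (uu (k+1)) * P2 v g (vv (j+1)) (uu k) z := by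
    simp only [Finset.mul_sum]
    rw [Finset.sum_comm]
    refine Finset.sum_congr rfl fun a _ => Finset.sum_congr rfl fun b _ => ?_
    rw [P2_symm v g hg (uu b) (vv (a+1))]
    ring
  have K2 : ∑ j ∈ Finset.range (N+1), 12 * (z (uu (j+1)) * ∑ k ∈ Finset.range (N+1),
        z (uu (k+1)) * P2 v g (uu j) (uu (k+1)) z)
      = 12 * ∑ j ∈ Finset.range (N+1), z (uu (j+1)) * ∑ k ∈ Finset.range (N+1),
          z (uu (k+1)) * P2 v g (uu (j+1)) (uu k) z := by
    simp only [Finset.mul_sum]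
    rw [Finset.sum_comm]
    refine Finset.sum_congr rfl fun a _ => Finset.sum_congr rfl fun b _ => ?_
    rw [P2_symm v g hg (uu b) (uu (a+1))]
    ring
  have K3 : ∑ j ∈ Finset.range (N+1), 12 * (z (vv (j+1)) * ∑ k ∈ Finset.range (N+1),
        z (vv (k+1)) * P2 v g (vv j) (vv (k+1)) z)
      = 12 * ∑ j ∈ Finset.range (N+1), z (vv (j+1)) * ∑ k ∈ Finset.range (N+1),
          z (vv (k+1)) * P2 v g (vv (j+1)) (vv k) z := by
    simp only [Finset.mul_sum]
    rw [Finset.sum_comm]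
    refine Finset.sum_congr rfl fun a _ => Finset.sum_congr rfl fun b _ => ?_
    rw [P2_symm v g hg (vv b) (vv (a+1))]
    ring
  have K4 : ∑ j ∈ Finset.range (N+1), 12 * (z (vv (j+1)) * ∑ k ∈ Finset.range (N+1),
        z (uu (k+1)) * P2 v g (vv j) (uu (k+1)) z)
      = 12 * ∑ j ∈ Finset.range (N+1), z (uu (j+1)) * ∑ k ∈ Finset.range (N+1),
          z (vv (k+1)) * P2 v g (uu (j+1)) (vv k) z := by
    simp only [Finset.mul_sum]
    rw [Finset.sum_comm]
    refine Finset.sum_congr rfl fun a _ => Finset.sum_congr rfl fun b _ => ?_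
    rw [P2_symm v g hg (vv b) (uu (a+1))]
    ring
  have KdU : ∑ j ∈ Finset.range (N+1), 12 * (z (uu (j+1)) * ∑ k ∈ Finset.range (N+1),
        (if k + 1 = j then P1 v g (uu (k+1)) z else 0))
      = 12 * ∑ k ∈ Finset.range N, z (uu (k+1+1)) * P1 v g (uu (k+1)) z := by
    simp only [Finset.mul_sum, mul_ite, mul_zero]
    rw [shift_sum (fun j k => 12 * (z (uu (j+1)) * P1 v g (uu (k+1)) z))]
  have KdV : ∑ j ∈ Finset.range (N+1), 12 * (z (vv (j+1)) * ∑ k ∈ Finset.range (N+1),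
        (if k + 1 = j then P1 v g (vv (k+1)) z else 0))
      = 12 * ∑ k ∈ Finset.range N, z (vv (k+1+1)) * P1 v g (vv (k+1)) z := by
    simp only [Finset.mul_sum, mul_ite, mul_zero]
    rw [shift_sum (fun j k => 12 * (z (vv (j+1)) * P1 v g (vv (k+1)) z))]
  have telU : ∑ j ∈ Finset.range (N+1), z (uu (j+1)) * P1 v g (uu j) z
      = (∑ k ∈ Finset.range N, z (uu (k+1+1)) * P1 v g (uu (k+1)) z)
        + z (uu 1) * P1 v g (uu 0) z :=
    Finset.sum_range_succ' (fun j => z (uu (j+1)) * P1 v g (uu j) z) N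
  have telV : ∑ j ∈ Finset.range (N+1), z (vv (j+1)) * P1 v g (vv j) z
      = (∑ k ∈ Finset.range N, z (vv (k+1+1)) * P1 v g (vv (k+1)) z)
        + z (vv 1) * P1 v g (vv 0) z :=
    Finset.sum_range_succ' (fun j => z (vv (j+1)) * P1 v g (vv j) z) N
  rw [redC v g hg hN, redD v g hg hN]
  rw [Finset.sum_congr rfl htermC, Finset.sum_congr rfl htermD]
  rw [Finset.sum_sub_distrib, Finset.sum_add_distrib, Finset.sum_sub_distrib,
    Finset.sum_sub_distrib, Finset.sum_add_distrib]
  rw [Finset.sum_sub_distrib, Finset.sum_sub_distrib, Finset.sum_add_distrib,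
    Finset.sum_add_distrib, Finset.sum_sub_distrib]
  rw [K1, K2, K3, K4, KdU, KdV, telU, telV]
  ring
end aux6

/-- The commutator `X313 = [X3, X13]` equals `12 Σ (v_k ∂/∂v_k − u_k ∂/∂u_k)`, and
`[X, X313] = 12 u1 X1 − 12 v1 X2` where `X1 = ∂/∂u`, `X2 = ∂/∂v`. -/
theorem stmt9 : ∀ f, SmoothCyl f →
    (∀ z, X3op (X13op f) z - X13op (X3op f) z = X313op f z) ∧
    (∀ z, Xop (X313op f) z - X313op (Xop f) z =
      12 * z (uu 1) * pd (uu 0) f z - 12 * z (vv 1) * pd (vv 0) f z) := by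
  intro f hf
  obtain ⟨n, v, g, hg, hfg⟩ := hf
  have hfF : f = FF v g := funext hfg
  subst hfF
  have hN : ∀ k, (v k).2 < (Finset.univ.sup fun k => (v k).2) + 1 :=
    fun k => Nat.lt_succ_of_le (Finset.le_sup (f := fun k => (v k).2) (Finset.mem_univ k))
  constructor
  · intro z
    exact id1 v g hg hN z
  · intro z
    rw [pd_FF v g hg (uu 0) z, pd_FF v g hg (vv 0) z]
    exact id2 v g hg hN z
end
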